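/- Let K ⊆ ℝ^d be nonempty, closed, and convex, and let L : ℝ^k × ℝ^d → ℝ be differentiable with ℓ-Lipschitz gradient on ℝ^k × K, such that for every x ∈ ℝ^k the function λ ↦ L(x,λ) is μ-strongly concave on K (with μ > 0). Then for every x the maximum of L(x,·) over K is attained at a unique point λ*(x), and with κ := ℓ/μ and φ(x) := max_{λ∈K} L(x,λ): (i) the map x ↦ λ*(x) is κ-Lipschitz; (ii) φ is differentiable with ∇φ(x) = ∇_x L(x, λ*(x)); and (iii) ∇φ is (ℓ + κℓ)-Lipschitz, i.e., φ is (ℓ + κℓ)-smooth. -/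

import Mathlib

/-!
Strong concavity makes `L(x,·)` coercive, so it attains its maximum on the closed set `K` at a
point `λ*(x)`, unique by strict concavity. Adding the two first-order inequalities of the
`μ`-strongly concave `L(x₁,·)` at `λ*(x₁)` and `λ*(x₂)` to the optimality conditions
`⟪∇_λ L(xᵢ, λ*(xᵢ)), λ - λ*(xᵢ)⟫ ≤ 0` gives
`μ‖λ*(x₁) - λ*(x₂)‖ ≤ ‖∇_λ L(x₁, λ*(x₂)) - ∇_λ L(x₂, λ*(x₂))‖ ≤ ℓ‖x₁ - x₂‖`.
Since `λ*(y)` maximises `L(y,·)`, the increment `φ(y) - φ(x)` lies between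
`L(y, λ*(x)) - L(x, λ*(x))` and `L(y, λ*(y)) - L(x, λ*(y))`. By the descent lemma for `L(·, λ)`
and the Lipschitz bound on `λ*`, both are `⟪∇_x L(x, λ*(x)), y - x⟫ + O(‖y - x‖²)`, which
gives the gradient of `φ`; its Lipschitz constant `ℓ(1 + κ)` is then immediate.
-/

open scoped RealInnerProductSpace

noncomputable section

/-- The ℓ²-product `ℝ^k ×₂ ℝ^d` of Euclidean spaces. -/
abbrev ProdL2 (k d : ℕ) := WithLp 2 (EuclideanSpace ℝ (Fin k) × EuclideanSpace ℝ (Fin d))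

/-- Build a point of the ℓ²-product from its two components. -/
def pairL2 (k d : ℕ) (x : EuclideanSpace ℝ (Fin k)) (l : EuclideanSpace ℝ (Fin d)) :
    ProdL2 k d :=
  (WithLp.equiv 2 (EuclideanSpace ℝ (Fin k) × EuclideanSpace ℝ (Fin d))).symm (x, l)

open Filter Topology Asymptotics
open scoped NNReal ENNReal

section StrongConcave

variable {F : Type*} [NormedAddCommGroup F] [InnerProductSpace ℝ F]
  {s : Set F} {μ : ℝ} {f : F → ℝ} {g a b : F}

theorem StrongConcaveOn.le_add_inner_sub_sq [CompleteSpace F] (hf : StrongConcaveOn s μ f)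
    (hg : HasGradientAt f g a) (ha : a ∈ s) (hb : b ∈ s) :
    f b ≤ f a + ⟪g, b - a⟫ - μ / 2 * ‖b - a‖ ^ 2 := by
  have hslope : Tendsto (fun t : ℝ => t⁻¹ * (f (a + t • (b - a)) - f a)) (𝓝[>] 0)
      (𝓝 ⟪g, b - a⟫) := by
    have h := hasLineDerivAt_iff_tendsto_slope_zero.mp (hg.hasFDerivAt.hasLineDerivAt (b - a))
    simpa using h.mono_left (nhdsGT_le_nhdsNE 0)
  have hlower : Tendsto (fun t : ℝ => f b - f a + (1 - t) * (μ / 2 * ‖b - a‖ ^ 2)) (𝓝[>] 0)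
      (𝓝 (f b - f a + (1 - 0) * (μ / 2 * ‖b - a‖ ^ 2))) :=
    (Continuous.tendsto (by fun_prop) 0).mono_left nhdsWithin_le_nhds
  have hle : ∀ᶠ t in 𝓝[>] (0 : ℝ), f b - f a + (1 - t) * (μ / 2 * ‖b - a‖ ^ 2) ≤
      t⁻¹ * (f (a + t • (b - a)) - f a) := by
    filter_upwards [Ioc_mem_nhdsGT one_pos] with t ⟨ht0, ht1⟩
    have h := hf.2 ha hb (sub_nonneg.2 ht1) ht0.le (sub_add_cancel 1 t)
    rw [show (1 - t) • a + t • b = a + t • (b - a) by module, norm_sub_rev] at h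
    rw [le_inv_mul_iff₀ ht0]
    simp only [smul_eq_mul] at h
    nlinarith
  linarith [le_of_tendsto_of_tendsto hlower hslope hle]

theorem IsMaxOn.inner_sub_nonpos_of_hasGradientAt [CompleteSpace F] (hmax : IsMaxOn f s a)
    (hs : Convex ℝ s) (hg : HasGradientAt f g a) (ha : a ∈ s) (hb : b ∈ s) :
    ⟪g, b - a⟫ ≤ 0 := by
  simpa using hmax.localize.hasFDerivWithinAt_nonpos hg.hasFDerivAt.hasFDerivWithinAt
    (sub_mem_posTangentConeAt_of_segment_subset (hs.segment_subset ha hb))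

theorem StrongConcaveOn.mul_norm_sub_le_of_isMaxOn [CompleteSpace F] {f₁ f₂ : F → ℝ} {a₁ a₂ : F}
    (hf₁ : StrongConcaveOn s μ f₁) (hd₁ : Differentiable ℝ f₁) (hd₂ : DifferentiableAt ℝ f₂ a₂)
    (h₁ : IsMaxOn f₁ s a₁) (h₂ : IsMaxOn f₂ s a₂) (ha₁ : a₁ ∈ s) (ha₂ : a₂ ∈ s) :
    μ * ‖a₁ - a₂‖ ≤ ‖gradient f₁ a₂ - gradient f₂ a₂‖ := by
  have hfo₁ := hf₁.le_add_inner_sub_sq (hd₁ a₁).hasGradientAt ha₁ ha₂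
  have hfo₂ := hf₁.le_add_inner_sub_sq (hd₁ a₂).hasGradientAt ha₂ ha₁
  have hvi₁ := h₁.inner_sub_nonpos_of_hasGradientAt hf₁.1 (hd₁ a₁).hasGradientAt ha₁ ha₂
  have hvi₂ := h₂.inner_sub_nonpos_of_hasGradientAt hf₁.1 hd₂.hasGradientAt ha₂ ha₁
  have hcs := real_inner_le_norm (gradient f₁ a₂ - gradient f₂ a₂) (a₁ - a₂)
  rw [inner_sub_left] at hcs
  rw [norm_sub_rev a₂ a₁] at hfo₁
  have hsq : μ * ‖a₁ - a₂‖ ^ 2 ≤ ‖gradient f₁ a₂ - gradient f₂ a₂‖ * ‖a₁ - a₂‖ := by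
    linarith
  rcases (norm_nonneg (a₁ - a₂)).eq_or_lt with h0 | hpos
  · rw [← h0, mul_zero]; exact norm_nonneg _
  · exact le_of_mul_le_mul_right (by linarith) hpos

theorem StrongConcaveOn.exists_isMaxOn [CompleteSpace F] [ProperSpace F]
    (hf : StrongConcaveOn s μ f) (hμ : 0 < μ) (hd : Differentiable ℝ f) (hs : IsClosed s)
    (hne : s.Nonempty) : ∃ a ∈ s, IsMaxOn f s a := by
  obtain ⟨a₀, ha₀⟩ := hne
  set R := 2 * ‖gradient f a₀‖ / μ
  refine hd.continuous.continuousOn.exists_isMaxOn' hs ha₀ (eventually_inf_principal.2 ?_)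
  filter_upwards [(isCompact_closedBall a₀ R).compl_mem_cocompact] with b hbR hb
  have hR : R < ‖b - a₀‖ := by simpa [dist_eq_norm] using hbR
  have hgrowth : 2 * ‖gradient f a₀‖ ≤ μ * ‖b - a₀‖ := by
    rw [div_lt_iff₀ hμ] at hR; linarith
  have hfo := hf.le_add_inner_sub_sq (hd a₀).hasGradientAt ha₀ hb
  have hcs := real_inner_le_norm (gradient f a₀) (b - a₀)
  nlinarith [norm_nonneg (b - a₀)]

end StrongConcave

section Gradient

variable {E : Type*} [NormedAddCommGroup E] [InnerProductSpace ℝ E] [CompleteSpace E]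
  {f : E → ℝ}

theorem abs_sub_sub_inner_le_of_lipschitzWith {g : E → E} {C : ℝ≥0}
    (hf : ∀ y, HasGradientAt f (g y) y) (hg : LipschitzWith C g) (x y : E) :
    |f y - f x - ⟪g x, y - x⟫| ≤ C * ‖y - x‖ ^ 2 := by
  have hbound : ∀ z ∈ Metric.closedBall x ‖y - x‖,
      ‖InnerProductSpace.toDual ℝ E (g z) - InnerProductSpace.toDual ℝ E (g x)‖ ≤ C * ‖y - x‖ := by
    intro z hz
    rw [← map_sub, LinearIsometryEquiv.norm_map]
    exact (hg.norm_sub_le z x).trans (by gcongr; simpa [dist_eq_norm] using hz)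
  have h := (convex_closedBall x ‖y - x‖).norm_image_sub_le_of_norm_hasFDerivWithin_le'
    (fun z _ => (hf z).hasFDerivAt.hasFDerivWithinAt) hbound (Metric.mem_closedBall_self
      (norm_nonneg _)) (y := y) (by simp [dist_eq_norm])
  rw [InnerProductSpace.toDual_apply_apply] at h
  rwa [← Real.norm_eq_abs, sq, ← mul_assoc]

theorem hasGradientAt_of_abs_sub_sub_inner_le {g x : E} {C : ℝ}
    (h : ∀ y, |f y - f x - ⟪g, y - x⟫| ≤ C * ‖y - x‖ ^ 2) : HasGradientAt f g x := by
  refine HasFDerivAt.of_isLittleO (IsBigO.trans_isLittleO (g := fun y => ‖y - x‖ ^ 2) ?_ ?_)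
  · exact IsBigO.of_bound C (Eventually.of_forall fun y => by simpa using h y)
  · exact (isLittleO_norm_pow_id one_lt_two).comp_tendsto (tendsto_sub_nhds_zero_iff.2 tendsto_id)

end Gradient

theorem WithLp.norm_toLp_prodMk_le_add {p : ℝ≥0∞} [Fact (1 ≤ p)] {α β : Type*}
    [SeminormedAddCommGroup α] [SeminormedAddCommGroup β] (u : α) (v : β) :
    ‖toLp p (u, v)‖ ≤ ‖u‖ + ‖v‖ := by
  have h : toLp p (u, v) = toLp p (u, 0) + toLp p (0, v) := by
    rw [← toLp_add, Prod.mk_add_mk, add_zero, zero_add]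
  simpa [h] using norm_add_le (toLp p (u, (0 : β))) (toLp p ((0 : α), v))

section Prod

open WithLp

variable {E F : Type*} [NormedAddCommGroup E] [InnerProductSpace ℝ E] [CompleteSpace E]
  [NormedAddCommGroup F] [InnerProductSpace ℝ F] [CompleteSpace F]
  {L : WithLp 2 (E × F) → ℝ} {G : WithLp 2 (E × F)}

theorem HasGradientAt.comp_toLp_prodMk_left {x : E} {y : F}
    (h : HasGradientAt L G (toLp 2 (x, y))) :
    HasGradientAt (fun x' => L (toLp 2 (x', y))) G.fst x := by
  have hι := (prodContinuousLinearEquiv 2 ℝ E F).symm.hasFDerivAt.comp x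
    (hasFDerivAt_prodMk_left x y)
  refine (h.hasFDerivAt.comp x hι).congr_fderiv ?_
  ext v
  simp

theorem HasGradientAt.comp_toLp_prodMk_right {x : E} {y : F}
    (h : HasGradientAt L G (toLp 2 (x, y))) :
    HasGradientAt (fun y' => L (toLp 2 (x, y'))) G.snd y := by
  have hι := (prodContinuousLinearEquiv 2 ℝ E F).symm.hasFDerivAt.comp y
    (hasFDerivAt_prodMk_right x y)
  refine (h.hasFDerivAt.comp y hι).congr_fderiv ?_
  ext v
  simp

variable {K : Set F} {ℓ : ℝ≥0} {μ : ℝ}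

theorem LipschitzOnWith.norm_gradient_toLp_sub_le
    (hlip : LipschitzOnWith ℓ (gradient L) {p | (ofLp p).2 ∈ K}) {x x' : E} {l l' : F}
    (hl : l ∈ K) (hl' : l' ∈ K) :
    ‖gradient L (toLp 2 (x, l)) - gradient L (toLp 2 (x', l'))‖ ≤ ℓ * (‖x - x'‖ + ‖l - l'‖) := by
  refine (hlip.norm_sub_le hl hl').trans (mul_le_mul_of_nonneg_left ?_ ℓ.coe_nonneg)
  rw [← toLp_sub, Prod.mk_sub_mk]
  exact norm_toLp_prodMk_le_add _ _

theorem mul_norm_sub_le_of_isMaxOn_of_lipschitzOnWith (hd : Differentiable ℝ L)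
    (hlip : LipschitzOnWith ℓ (gradient L) {p | (ofLp p).2 ∈ K}) {x₁ x₂ : E} {a₁ a₂ : F}
    (hconc : StrongConcaveOn K μ fun l => L (toLp 2 (x₁, l)))
    (h₁ : IsMaxOn (fun l => L (toLp 2 (x₁, l))) K a₁)
    (h₂ : IsMaxOn (fun l => L (toLp 2 (x₂, l))) K a₂) (ha₁ : a₁ ∈ K) (ha₂ : a₂ ∈ K) :
    μ * ‖a₁ - a₂‖ ≤ ℓ * ‖x₁ - x₂‖ := by
  have hgrad : ∀ x l,
      gradient (fun l' => L (toLp 2 (x, l'))) l = (gradient L (toLp 2 (x, l))).snd :=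
    fun x l => (hd _).hasGradientAt.comp_toLp_prodMk_right.gradient
  have hd' : ∀ x, Differentiable ℝ fun l => L (toLp 2 (x, l)) :=
    fun x l => (hd _).hasGradientAt.comp_toLp_prodMk_right.differentiableAt
  calc μ * ‖a₁ - a₂‖
      ≤ ‖gradient (fun l => L (toLp 2 (x₁, l))) a₂ - gradient (fun l => L (toLp 2 (x₂, l))) a₂‖ :=
        hconc.mul_norm_sub_le_of_isMaxOn (hd' x₁) (hd' x₂ a₂) h₁ h₂ ha₁ ha₂
    _ ≤ ‖gradient L (toLp 2 (x₁, a₂)) - gradient L (toLp 2 (x₂, a₂))‖ := by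
        rw [hgrad, hgrad, ← sub_snd]; exact WithLp.norm_snd_le E _
    _ ≤ ℓ * ‖x₁ - x₂‖ := by simpa using hlip.norm_gradient_toLp_sub_le (x := x₁) (x' := x₂) ha₂ ha₂

theorem LipschitzOnWith.abs_sub_sub_inner_fst_le (hd : Differentiable ℝ L)
    (hlip : LipschitzOnWith ℓ (gradient L) {p | (ofLp p).2 ∈ K}) {l : F} (hl : l ∈ K) (x y : E) :
    |L (toLp 2 (y, l)) - L (toLp 2 (x, l)) - ⟪(gradient L (toLp 2 (x, l))).fst, y - x⟫| ≤
      ℓ * ‖y - x‖ ^ 2 := by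
  refine abs_sub_sub_inner_le_of_lipschitzWith
    (fun _ => (hd _).hasGradientAt.comp_toLp_prodMk_left) (.of_dist_le_mul fun y y' => ?_) x y
  rw [dist_eq_norm, dist_eq_norm, ← sub_fst]
  calc ‖(gradient L (toLp 2 (y, l)) - gradient L (toLp 2 (y', l))).fst‖
      ≤ ‖gradient L (toLp 2 (y, l)) - gradient L (toLp 2 (y', l))‖ := WithLp.norm_fst_le E _
    _ ≤ ℓ * (‖y - y'‖ + ‖l - l‖) := hlip.norm_gradient_toLp_sub_le hl hl
    _ = ℓ * ‖y - y'‖ := by rw [sub_self, norm_zero, add_zero]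

theorem hasGradientAt_of_isMaxOn_of_lipschitzOnWith (hd : Differentiable ℝ L)
    (hlip : LipschitzOnWith ℓ (gradient L) {p | (ofLp p).2 ∈ K}) {lstar : E → F} {x : E} {κ : ℝ}
    (hmem : ∀ y, lstar y ∈ K) (hmax : ∀ y, IsMaxOn (fun l => L (toLp 2 (y, l))) K (lstar y))
    (hκ : ∀ y, ‖lstar y - lstar x‖ ≤ κ * ‖y - x‖) :
    HasGradientAt (fun y => L (toLp 2 (y, lstar y))) (gradient L (toLp 2 (x, lstar x))).fst x := by
  refine hasGradientAt_of_abs_sub_sub_inner_le (C := ℓ + ℓ * κ) fun y => abs_le.2 ⟨?_, ?_⟩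
  · have hdesc := abs_le.1 (hlip.abs_sub_sub_inner_fst_le hd (hmem x) x y)
    have hopt : L (toLp 2 (y, lstar x)) ≤ L (toLp 2 (y, lstar y)) := hmax y (hmem x)
    have hκ' : 0 ≤ ℓ * κ * ‖y - x‖ ^ 2 := by
      rw [mul_assoc, sq, ← mul_assoc κ]
      exact mul_nonneg ℓ.coe_nonneg (mul_nonneg ((hκ y).trans' (norm_nonneg _)) (norm_nonneg _))
    nlinarith
  · have hdesc := abs_le.1 (hlip.abs_sub_sub_inner_fst_le hd (hmem y) x y)
    have hopt : L (toLp 2 (x, lstar y)) ≤ L (toLp 2 (x, lstar x)) := hmax x (hmem y)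
    have hgrad : ⟪(gradient L (toLp 2 (x, lstar y))).fst - (gradient L (toLp 2 (x, lstar x))).fst,
        y - x⟫ ≤ ℓ * κ * ‖y - x‖ ^ 2 := by
      refine (real_inner_le_norm _ _).trans ?_
      rw [← sub_fst]
      calc ‖(gradient L (toLp 2 (x, lstar y)) - gradient L (toLp 2 (x, lstar x))).fst‖ * ‖y - x‖
          ≤ ℓ * (‖x - x‖ + ‖lstar y - lstar x‖) * ‖y - x‖ := by
            gcongr
            exact (WithLp.norm_fst_le E _).trans (hlip.norm_gradient_toLp_sub_le (hmem y) (hmem x))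
        _ ≤ ℓ * (κ * ‖y - x‖) * ‖y - x‖ := by
            rw [sub_self, norm_zero, zero_add]
            gcongr
            exact hκ y
        _ = ℓ * κ * ‖y - x‖ ^ 2 := by ring
    rw [inner_sub_left] at hgrad
    linarith

theorem LipschitzOnWith.norm_gradient_fst_sub_le_of_lipschitz
    (hlip : LipschitzOnWith ℓ (gradient L) {p | (ofLp p).2 ∈ K}) {lstar : E → F} {κ : ℝ}
    (hmem : ∀ y, lstar y ∈ K) (hκ : ∀ x y, ‖lstar x - lstar y‖ ≤ κ * ‖x - y‖) (x y : E) :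
    ‖(gradient L (toLp 2 (x, lstar x))).fst - (gradient L (toLp 2 (y, lstar y))).fst‖ ≤
      (ℓ + κ * ℓ) * ‖x - y‖ :=
  calc ‖(gradient L (toLp 2 (x, lstar x))).fst - (gradient L (toLp 2 (y, lstar y))).fst‖
      ≤ ℓ * (‖x - y‖ + ‖lstar x - lstar y‖) := by
        rw [← sub_fst]
        exact (WithLp.norm_fst_le E _).trans (hlip.norm_gradient_toLp_sub_le (hmem x) (hmem y))
    _ ≤ ℓ * (‖x - y‖ + κ * ‖x - y‖) := by gcongr; exact hκ x y
    _ = (ℓ + κ * ℓ) * ‖x - y‖ := by ring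

end Prod

theorem max_function_smoothness_general
    (k d : ℕ) (K : Set (EuclideanSpace ℝ (Fin d)))
    (hKne : K.Nonempty) (hKcl : IsClosed K)
    (L : ProdL2 k d → ℝ) (ℓ μ : ℝ) (hμ : 0 < μ) (hℓ : 0 ≤ ℓ)
    (hdiff : Differentiable ℝ L)
    (hlip : LipschitzOnWith ℓ.toNNReal (gradient L)
      {p : ProdL2 k d | ((WithLp.equiv 2 _) p).2 ∈ K})
    (hconc : ∀ x : EuclideanSpace ℝ (Fin k),
      StrongConcaveOn K μ fun l => L (pairL2 k d x l)) :
    ∃ lstar : EuclideanSpace ℝ (Fin k) → EuclideanSpace ℝ (Fin d),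
      (∀ x, lstar x ∈ K ∧
        (∀ l ∈ K, L (pairL2 k d x l) ≤ L (pairL2 k d x (lstar x))) ∧
        (∀ l ∈ K, (∀ l' ∈ K, L (pairL2 k d x l') ≤ L (pairL2 k d x l)) → l = lstar x)) ∧
      LipschitzWith (ℓ / μ).toNNReal lstar ∧
      Differentiable ℝ (fun x => L (pairL2 k d x (lstar x))) ∧
      (∀ x, gradient (fun y => L (pairL2 k d y (lstar y))) x =
        gradient (fun y => L (pairL2 k d y (lstar x))) x) ∧
      LipschitzWith (ℓ + (ℓ / μ) * ℓ).toNNReal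
        (gradient fun x => L (pairL2 k d x (lstar x))) := by
  have hlip' : LipschitzOnWith ℓ.toNNReal (gradient L) {p | (WithLp.ofLp p).2 ∈ K} := hlip
  choose lstar hmem hmax using fun x => (hconc x).exists_isMaxOn hμ
    (fun l => (hdiff _).hasGradientAt.comp_toLp_prodMk_right.differentiableAt) hKcl hKne
  have hκ : ∀ x y, ‖lstar x - lstar y‖ ≤ ℓ / μ * ‖x - y‖ := fun x y => by
    rw [div_mul_eq_mul_div, le_div_iff₀ hμ, mul_comm]
    simpa [Real.coe_toNNReal _ hℓ] using mul_norm_sub_le_of_isMaxOn_of_lipschitzOnWith hdiff hlip'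
      (hconc x) (hmax x) (hmax y) (hmem x) (hmem y)
  have hgrad : ∀ x, HasGradientAt (fun y => L (pairL2 k d y (lstar y)))
      (gradient L (pairL2 k d x (lstar x))).fst x :=
    fun x => hasGradientAt_of_isMaxOn_of_lipschitzOnWith hdiff hlip' hmem hmax (hκ · x)
  refine ⟨lstar, fun x => ⟨hmem x, hmax x, fun l hl hlmax => ?_⟩, ?_,
    fun x => (hgrad x).differentiableAt, fun x => ?_, ?_⟩
  · exact ((hconc x).strictConcaveOn hμ).eq_of_isMaxOn (isMaxOn_iff.2 hlmax) (hmax x) hl (hmem x)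
  · exact LipschitzWith.of_dist_le' fun x y => by simpa only [dist_eq_norm] using hκ x y
  · rw [(hgrad x).gradient]
    exact (hdiff _).hasGradientAt.comp_toLp_prodMk_left.gradient.symm
  · rw [funext fun x => (hgrad x).gradient]
    refine LipschitzWith.of_dist_le' fun x y => ?_
    have h := hlip'.norm_gradient_fst_sub_le_of_lipschitz hmem hκ x y
    rw [Real.coe_toNNReal _ hℓ] at h
    rwa [dist_eq_norm, dist_eq_norm]

/-- **Smoothness of the max-function (Lin–Jin–Jordan, Lemma 4.3).**
Let `K ⊆ ℝ^d` be nonempty, closed and convex, and let `L : ℝ^k × ℝ^d → ℝ` be differentiable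
with `ℓ`-Lipschitz gradient on `ℝ^k × K`, such that `λ ↦ L(x,λ)` is `μ`-strongly concave on
`K` for every `x`.  Then the maximum of `L(x,·)` over `K` is attained at a unique point
`λ*(x)`; with `κ = ℓ/μ` and `φ(x) = max_{λ∈K} L(x,λ) = L(x,λ*(x))`:
(i) `λ*` is `κ`-Lipschitz; (ii) `φ` is differentiable with `∇φ(x) = ∇_x L(x, λ*(x))`
(the partial gradient in `x` at frozen `λ = λ*(x)`); (iii) `∇φ` is `(ℓ + κℓ)`-Lipschitz. -/
theorem max_function_smoothness
    (k d : ℕ) (K : Set (EuclideanSpace ℝ (Fin d)))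
    (hKne : K.Nonempty) (hKcl : IsClosed K) (hKconv : Convex ℝ K)
    (L : ProdL2 k d → ℝ) (ℓ μ : ℝ) (hμ : 0 < μ) (hℓ : 0 ≤ ℓ)
    (hdiff : Differentiable ℝ L)
    (hlip : LipschitzOnWith ℓ.toNNReal (gradient L)
      {p : ProdL2 k d | ((WithLp.equiv 2 _) p).2 ∈ K})
    (hconc : ∀ x : EuclideanSpace ℝ (Fin k),
      StrongConcaveOn K μ fun l => L (pairL2 k d x l)) :
    ∃ lstar : EuclideanSpace ℝ (Fin k) → EuclideanSpace ℝ (Fin d),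
      (∀ x, lstar x ∈ K ∧
        (∀ l ∈ K, L (pairL2 k d x l) ≤ L (pairL2 k d x (lstar x))) ∧
        (∀ l ∈ K, (∀ l' ∈ K, L (pairL2 k d x l') ≤ L (pairL2 k d x l)) → l = lstar x)) ∧
      LipschitzWith (ℓ / μ).toNNReal lstar ∧
      Differentiable ℝ (fun x => L (pairL2 k d x (lstar x))) ∧
      (∀ x, gradient (fun y => L (pairL2 k d y (lstar y))) x =
        gradient (fun y => L (pairL2 k d y (lstar x))) x) ∧
      LipschitzWith (ℓ + (ℓ / μ) * ℓ).toNNReal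
        (gradient fun x => L (pairL2 k d x (lstar x))) :=
  max_function_smoothness_general k d K hKne hKcl L ℓ μ hμ hℓ hdiff hlip hconc

end
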